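/- arXiv:2603.10602 — 3 statements merged into one kernel-verified Lean document; each statement's English description precedes it below -/
import Mathlib

section
/- Let Ω ⊆ ℝ^d be open, r > 0, E := {x ∈ Ω : B(x,r) ⊆ Ω}, and let f ∈ L¹(Ω) with f ≥ 0 and ∫_Ω f > 0. Set M := ∫_E f and suppose M > 0. Let {x_j}_{j∈J} ⊆ E be a countable family with E ⊆ ⋃_j B(x_j, r/2) such that each point of ℝ^d lies in at most N_d of the balls B(x_j, r). Then there exists j₀ ∈ J with ∫_{B(x_{j₀}, r/2)} f ≥ (M / (2 N_d ∫_Ω f)) · ∫_{B(x_{j₀}, r)} f. -/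
/-!
If every half-ball `B(x_j, r/2)` carried less than `c = M / (2 N_d ∫_Ω f)` times the mass of
`B(x_j, r)`, then covering `E` by the half-balls and summing over the balls, which overlap at
most `N_d` times inside `Ω`, would give `M ≤ c N_d ∫_Ω f = M / 2`.
-/

open MeasureTheory Metric Set
open scoped ENNReal

section Overlap

variable {α ι : Type*} {g : α → ℝ≥0∞} {s t : ι → Set α} {N : ℕ}

theorem tsum_indicator_le_of_encard_le (hN : ∀ x, {j | x ∈ s j}.encard ≤ N) (x : α) :
    ∑' j, (s j).indicator g x ≤ N * g x := by
  calc ∑' j, (s j).indicator g x = ∑' j, {j | x ∈ s j}.indicator (fun _ ↦ g x) j :=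
        rfl
    _ = {j | x ∈ s j}.encard * g x := by rw [← tsum_subtype, ENNReal.tsum_set_const]
    _ ≤ N * g x := by gcongr; exact_mod_cast hN x

variable [MeasurableSpace α] [Countable ι] {μ : Measure α}

theorem tsum_setLIntegral_le_of_encard_le (hg : AEMeasurable g μ)
    (hs : ∀ j, MeasurableSet (s j)) (hN : ∀ x, {j | x ∈ s j}.encard ≤ N) :
    ∑' j, ∫⁻ x in s j, g x ∂μ ≤ N * ∫⁻ x, g x ∂μ := by
  calc ∑' j, ∫⁻ x in s j, g x ∂μ = ∫⁻ x, ∑' j, (s j).indicator g x ∂μ := by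
        rw [lintegral_tsum fun j ↦ hg.indicator (hs j)]
        simp_rw [lintegral_indicator (hs _)]
    _ ≤ ∫⁻ x, N * g x ∂μ := lintegral_mono (tsum_indicator_le_of_encard_le hN)
    _ = N * ∫⁻ x, g x ∂μ := lintegral_const_mul' _ _ (ENNReal.natCast_ne_top N)

theorem setLIntegral_le_of_subset_iUnion_of_encard_le {c : ℝ≥0∞} {E : Set α}
    (hg : AEMeasurable g μ) (hcover : E ⊆ ⋃ j, s j)
    (hst : ∀ j, ∫⁻ x in s j, g x ∂μ ≤ c * ∫⁻ x in t j, g x ∂μ)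
    (ht : ∀ j, MeasurableSet (t j)) (hN : ∀ x, {j | x ∈ t j}.encard ≤ N) :
    ∫⁻ x in E, g x ∂μ ≤ c * N * ∫⁻ x, g x ∂μ := by
  calc ∫⁻ x in E, g x ∂μ ≤ ∑' j, ∫⁻ x in s j, g x ∂μ :=
        (lintegral_mono_set hcover).trans (lintegral_iUnion_le _ _)
    _ ≤ ∑' j, c * ∫⁻ x in t j, g x ∂μ := ENNReal.tsum_le_tsum hst
    _ = c * ∑' j, ∫⁻ x in t j, g x ∂μ := ENNReal.tsum_mul_left
    _ ≤ c * N * ∫⁻ x, g x ∂μ := by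
        rw [mul_assoc]; gcongr; exact tsum_setLIntegral_le_of_encard_le hg ht hN

end Overlap

theorem exists_good_ball_general {d : ℕ} (Ω : Set (EuclideanSpace ℝ (Fin d)))
    (r : ℝ) (hr : 0 < r) (f : EuclideanSpace ℝ (Fin d) → ℝ)
    (hf : ∀ x, 0 ≤ f x) (hint : IntegrableOn f Ω) (hpos : 0 < ∫ x in Ω, f x)
    (E : Set (EuclideanSpace ℝ (Fin d))) (hE : E = {x ∈ Ω | ball x r ⊆ Ω})
    (hM : 0 < ∫ x in E, f x)
    {ι : Type*} [Countable ι] (xj : ι → EuclideanSpace ℝ (Fin d))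
    (hxj : ∀ j, xj j ∈ E) (hcover : E ⊆ ⋃ j, ball (xj j) (r / 2))
    (Nd : ℕ) (hNd : 0 < Nd)
    (hoverlap : ∀ y : EuclideanSpace ℝ (Fin d),
      ({j | y ∈ ball (xj j) r}).Finite ∧ ({j | y ∈ ball (xj j) r}).ncard ≤ Nd) :
    ∃ j₀ : ι, ((∫ x in E, f x) / (2 * Nd * ∫ x in Ω, f x)) * ∫ x in ball (xj j₀) r, f x ≤
      ∫ x in ball (xj j₀) (r / 2), f x := by
  by_contra! hcon
  set M := ∫ x in E, f x
  set A := ∫ x in Ω, f x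
  set c := M / (2 * Nd * A)
  have hball (j : ι) : ball (xj j) r ⊆ Ω := (hE ▸ hxj j).2
  have hEΩ : E ⊆ Ω := hE ▸ sep_subset _ _
  have hofReal (s) (hs : s ⊆ Ω) :
      ENNReal.ofReal (∫ x in s, f x) = ∫⁻ x in s, ENNReal.ofReal (f x) ∂volume.restrict Ω := by
    rw [Measure.restrict_restrict_of_subset hs,
      ofReal_integral_eq_lintegral_ofReal (hint.mono_set hs) (.of_forall hf)]
  have hbound : ENNReal.ofReal M ≤ ENNReal.ofReal c * Nd * ENNReal.ofReal A := by
    rw [hofReal E hEΩ, ofReal_integral_eq_lintegral_ofReal hint (.of_forall hf)]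
    refine setLIntegral_le_of_subset_iUnion_of_encard_le hint.aemeasurable.ennreal_ofReal hcover
      (t := fun j ↦ ball (xj j) r) (fun j ↦ ?_) (fun _ ↦ measurableSet_ball) (fun y ↦ ?_)
    · rw [← hofReal _ ((ball_subset_ball (by linarith)).trans (hball j)), ← hofReal _ (hball j),
        ← ENNReal.ofReal_mul (by positivity)]
      exact ENNReal.ofReal_le_ofReal (hcon j).le
    · rw [← (hoverlap y).1.cast_ncard_eq]
      exact_mod_cast (hoverlap y).2
  have hcNA : c * Nd * A = M / 2 := by
    simp only [c]; field_simp
  rw [← ENNReal.ofReal_natCast, ← ENNReal.ofReal_mul (by positivity),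
    ← ENNReal.ofReal_mul (by positivity), hcNA,
    ENNReal.ofReal_le_ofReal_iff (by positivity)] at hbound
  linarith

/-- **Existence of a good ball.** Let `E = Ω₋ᵣ` be the `r`-interior of the open set `Ω`,
`f ≥ 0` integrable on `Ω` with positive mass `M` on `E`. Given a countable family of
centers in `E` whose half-balls cover `E` and whose `r`-balls have overlap at most `N_d`,
some ball satisfies `∫_{B(x_{j₀},r/2)} f ≥ (M / (2 N_d ∫_Ω f)) ∫_{B(x_{j₀},r)} f`. -/
theorem exists_good_ball {d : ℕ} (Ω : Set (EuclideanSpace ℝ (Fin d))) (hΩ : IsOpen Ω)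
    (r : ℝ) (hr : 0 < r) (f : EuclideanSpace ℝ (Fin d) → ℝ) (hmeas : Measurable f)
    (hf : ∀ x, 0 ≤ f x) (hint : IntegrableOn f Ω) (hpos : 0 < ∫ x in Ω, f x)
    (E : Set (EuclideanSpace ℝ (Fin d))) (hE : E = {x ∈ Ω | ball x r ⊆ Ω})
    (hM : 0 < ∫ x in E, f x)
    {ι : Type*} [Countable ι] (xj : ι → EuclideanSpace ℝ (Fin d))
    (hxj : ∀ j, xj j ∈ E) (hcover : E ⊆ ⋃ j, ball (xj j) (r / 2))
    (Nd : ℕ) (hNd : 0 < Nd)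
    (hoverlap : ∀ y : EuclideanSpace ℝ (Fin d),
      ({j | y ∈ ball (xj j) r}).Finite ∧ ({j | y ∈ ball (xj j) r}).ncard ≤ Nd) :
    ∃ j₀ : ι, ((∫ x in E, f x) / (2 * Nd * ∫ x in Ω, f x)) * ∫ x in ball (xj j₀) r, f x ≤
      ∫ x in ball (xj j₀) (r / 2), f x :=
  exists_good_ball_general Ω r hr f hf hint hpos E hE hM xj hxj hcover Nd hNd hoverlap
end

section
/- Let Ω ⊆ ℝ^d be open, r > 0, f ∈ L¹(Ω) nonnegative with ∫_Ω f = N > 0 and ∫_{Ω_{−r}} f = M > 0. Then there exists x₀ ∈ Ω_{−r} with B(x₀, r) ⊆ Ω such that ∫_{B(x₀, r/2)} f ≥ (M / (2 · 5^d · N)) · ∫_{B(x₀, r)} f, and in particular ∫_{B(x₀, r)} f > 0. -/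
/-!
Suppose every ball were bad, `∫_{B(x,r/2)} f ≤ c ∫_{B(x,r)} f` for all `x ∈ Ω₋ᵣ`, where
`c = M / (2·5^d·N)`. Vitali's lemma gives `S ⊆ Ω₋ᵣ` with pairwise disjoint balls `B(x, r/4)`
such that the balls `B(x, r/2)`, `x ∈ S`, cover `Ω₋ᵣ`. A point lies in at most `5^d` of the balls
`B(x, r)`, `x ∈ S`: the corresponding disjoint `r/4`-balls all fit in one ball of radius `5r/4`.
Hence `M ≤ ∑ ∫_{B(x,r/2)} f ≤ c ∑ ∫_{B(x,r)} f ≤ c·5^d·N = M/2`, a contradiction.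
-/

open MeasureTheory Metric Set

open scoped ENNReal

section Multiplicity

variable {α ι : Type*}

lemma tsum_indicator_one_eq_encard (s : ι → Set α) (y : α) :
    ∑' i, (s i).indicator (1 : α → ℝ≥0∞) y = {i | y ∈ s i}.encard := by
  rw [← ENNReal.tsum_set_one, tsum_subtype {i | y ∈ s i} fun _ => 1]
  rfl

theorem tsum_setLIntegral_le_mul_lintegral [Countable ι] [MeasurableSpace α] {μ : Measure α}
    {s : ι → Set α} (hs : ∀ i, MeasurableSet (s i)) {K : ℝ≥0∞} (hK : K ≠ ∞)
    (hmult : ∀ y, ({i | y ∈ s i}.encard : ℝ≥0∞) ≤ K) {g : α → ℝ≥0∞} (hg : AEMeasurable g μ) :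
    ∑' i, ∫⁻ y in s i, g y ∂μ ≤ K * ∫⁻ y, g y ∂μ := by
  have hpt : ∀ y, ∑' i, (s i).indicator g y ≤ K * g y := fun y => calc
    ∑' i, (s i).indicator g y = (∑' i, (s i).indicator 1 y) * g y := by
      rw [← ENNReal.tsum_mul_right]
      congr 1 with i
      by_cases h : y ∈ s i <;> simp [h]
    _ ≤ K * g y := by grw [tsum_indicator_one_eq_encard, hmult]
  calc ∑' i, ∫⁻ y in s i, g y ∂μ = ∫⁻ y, ∑' i, (s i).indicator g y ∂μ := by
        rw [lintegral_tsum fun i => hg.indicator (hs i)]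
        simp only [lintegral_indicator (hs _)]
    _ ≤ ∫⁻ y, K * g y ∂μ := lintegral_mono hpt
    _ = K * ∫⁻ y, g y ∂μ := lintegral_const_mul' K g hK

end Multiplicity

lemma Set.PairwiseDisjoint.countable_of_ball {X : Type*} [PseudoMetricSpace X]
    [TopologicalSpace.SeparableSpace X] {u : Set X} {ρ : ℝ} (hu : u.PairwiseDisjoint (ball · ρ))
    (hρ : 0 < ρ) : u.Countable :=
  hu.countable_of_isOpen (fun _ _ => isOpen_ball) fun _ _ => nonempty_ball.2 hρ

lemma exists_pairwiseDisjoint_ball_cover {X : Type*} [MetricSpace X] (t : Set X) {ρ : ℝ}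
    (hρ : 0 < ρ) :
    ∃ u ⊆ t, u.PairwiseDisjoint (ball · ρ) ∧ t ⊆ ⋃ x : u, ball (x : X) (2 * ρ) := by
  obtain ⟨u, hut, hu, hcover⟩ := Vitali.exists_disjoint_subfamily_covering_enlargement
    (ball · ρ) t (fun _ => ρ) 2 one_lt_two (fun _ _ => hρ.le) ρ (fun _ _ => le_rfl)
    fun _ _ => nonempty_ball.2 hρ
  refine ⟨u, hut, hu, fun a ha => ?_⟩
  obtain ⟨b, hb, ⟨z, hza, hzb⟩, -⟩ := hcover a ha
  refine mem_iUnion.2 ⟨⟨b, hb⟩, mem_ball.2 ?_⟩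
  linarith [dist_triangle a z b, mem_ball'.1 hza, mem_ball.1 hzb]

section FiniteDimensional

variable {E : Type*} [NormedAddCommGroup E] [NormedSpace ℝ E] [FiniteDimensional ℝ E]
  [MeasurableSpace E] [BorelSpace E]

lemma encard_le_of_pairwiseDisjoint_ball_subset_ball {u : Set E} {ρ k : ℝ} (hρ : 0 < ρ)
    (hk : 0 < k) (hu : u.PairwiseDisjoint (ball · ρ)) {y : E}
    (hsub : ∀ x ∈ u, ball x ρ ⊆ ball y (k * ρ)) :
    (u.encard : ℝ≥0∞) ≤ ENNReal.ofReal (k ^ Module.finrank ℝ E) := by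
  let μ : Measure E := Measure.addHaar
  have hV : μ (ball 0 ρ) ≠ 0 := (measure_ball_pos μ 0 hρ).ne'
  refine (ENNReal.mul_le_mul_iff_left hV measure_ball_lt_top.ne).1 ?_
  calc (u.encard : ℝ≥0∞) * μ (ball 0 ρ) = ∑' x : u, μ (ball x ρ) := by
        simp only [Measure.addHaar_ball_center, ENNReal.tsum_set_const]
    _ = μ (⋃ x ∈ u, ball x ρ) :=
        (measure_biUnion (hu.countable_of_ball hρ) hu fun _ _ => measurableSet_ball).symm
    _ ≤ μ (ball y (k * ρ)) := measure_mono (iUnion₂_subset hsub)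
    _ = ENNReal.ofReal (k ^ Module.finrank ℝ E) * μ (ball 0 ρ) :=
        Measure.addHaar_ball_mul_of_pos μ y hk ρ

lemma encard_setOf_mem_ball_le {u : Set E} {r : ℝ} (hr : 0 < r)
    (hu : u.PairwiseDisjoint (ball · (r / 4))) (y : E) :
    ({x : u | y ∈ ball (x : E) r}.encard : ℝ≥0∞) ≤ ENNReal.ofReal (5 ^ Module.finrank ℝ E) := by
  have himage : ((↑) : u → E) '' {x : u | y ∈ ball (x : E) r} = u ∩ ball y r := by
    simp only [mem_ball_comm (x := y)]
    exact Subtype.image_preimage_coe u (ball y r)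
  rw [← Subtype.val_injective.injOn.encard_image, himage]
  refine encard_le_of_pairwiseDisjoint_ball_subset_ball (by positivity) (by norm_num)
    (y := y) (hu.subset inter_subset_left) fun x hx => ball_subset_ball' ?_
  linarith [mem_ball.1 hx.2]

theorem tsum_setLIntegral_ball_le {u : Set E} {r : ℝ} (hr : 0 < r)
    (hu : u.PairwiseDisjoint (ball · (r / 4))) {μ : Measure E} {g : E → ℝ≥0∞}
    (hg : AEMeasurable g μ) :
    ∑' x : u, ∫⁻ y in ball (x : E) r, g y ∂μ ≤
      ENNReal.ofReal (5 ^ Module.finrank ℝ E) * ∫⁻ y, g y ∂μ :=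
  have : Countable u := (hu.countable_of_ball (by positivity)).to_subtype
  tsum_setLIntegral_le_mul_lintegral (fun _ => measurableSet_ball) ENNReal.ofReal_ne_top
    (encard_setOf_mem_ball_le hr hu) hg

theorem setLIntegral_le_of_forall_setLIntegral_ball_le {Ω : Set E} {r : ℝ} (hr : 0 < r)
    {μ : Measure E} {g : E → ℝ≥0∞} (hg : AEMeasurable g (μ.restrict Ω)) {c : ℝ≥0∞}
    (hbad : ∀ x ∈ {x ∈ Ω | ball x r ⊆ Ω},
      ∫⁻ y in ball x (r / 2), g y ∂μ ≤ c * ∫⁻ y in ball x r, g y ∂μ) :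
    ∫⁻ y in {x ∈ Ω | ball x r ⊆ Ω}, g y ∂μ ≤
      c * (ENNReal.ofReal (5 ^ Module.finrank ℝ E) * ∫⁻ y in Ω, g y ∂μ) := by
  obtain ⟨u, huΩ, hu, hcover⟩ :=
    exists_pairwiseDisjoint_ball_cover {x ∈ Ω | ball x r ⊆ Ω} (ρ := r / 4) (by positivity)
  have : Countable u := (hu.countable_of_ball (by positivity)).to_subtype
  rw [show 2 * (r / 4) = r / 2 by ring] at hcover
  calc ∫⁻ y in {x ∈ Ω | ball x r ⊆ Ω}, g y ∂μ ≤ ∫⁻ y in ⋃ x : u, ball (x : E) (r / 2), g y ∂μ :=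
        lintegral_mono_set hcover
    _ ≤ ∑' x : u, ∫⁻ y in ball (x : E) (r / 2), g y ∂μ := lintegral_iUnion_le _ _
    _ ≤ ∑' x : u, c * ∫⁻ y in ball (x : E) r, g y ∂μ :=
        ENNReal.tsum_le_tsum fun x => hbad x (huΩ x.2)
    _ = c * ∑' x : u, ∫⁻ y in ball (x : E) r, g y ∂(μ.restrict Ω) := by
        rw [ENNReal.tsum_mul_left]
        refine congrArg _ (tsum_congr fun x => ?_)
        rw [Measure.restrict_restrict_of_subset (huΩ x.2).2]
    _ ≤ c * (ENNReal.ofReal (5 ^ Module.finrank ℝ E) * ∫⁻ y in Ω, g y ∂μ) := by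
        grw [tsum_setLIntegral_ball_le hr hu hg]

theorem setIntegral_le_of_forall_setIntegral_ball_le {Ω : Set E} {r : ℝ} (hr : 0 < r)
    {μ : Measure E} {f : E → ℝ} (hf : ∀ x, 0 ≤ f x) (hint : IntegrableOn f Ω μ) {c : ℝ}
    (hc : 0 ≤ c) (hbad : ∀ x ∈ {x ∈ Ω | ball x r ⊆ Ω},
      ∫ y in ball x (r / 2), f y ∂μ ≤ c * ∫ y in ball x r, f y ∂μ) :
    ∫ y in {x ∈ Ω | ball x r ⊆ Ω}, f y ∂μ ≤ c * (5 ^ Module.finrank ℝ E * ∫ y in Ω, f y ∂μ) := by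
  have hofReal : ∀ s ⊆ Ω,
      ENNReal.ofReal (∫ x in s, f x ∂μ) = ∫⁻ x in s, ENNReal.ofReal (f x) ∂μ :=
    fun s hs => ofReal_integral_eq_lintegral_ofReal (hint.mono_set hs) (.of_forall hf)
  have key := setLIntegral_le_of_forall_setLIntegral_ball_le hr
    hint.aemeasurable.ennreal_ofReal (c := ENNReal.ofReal c) fun x hx => by
      rw [← hofReal _ ((ball_subset_ball (by linarith)).trans hx.2), ← hofReal _ hx.2,
        ← ENNReal.ofReal_mul hc]
      exact ENNReal.ofReal_le_ofReal (hbad x hx)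
  have hΩ : 0 ≤ ∫ y in Ω, f y ∂μ := setIntegral_nonneg_of_ae (.of_forall hf)
  rwa [← hofReal _ (fun x hx => hx.1), ← hofReal _ subset_rfl,
    ← ENNReal.ofReal_mul (by positivity), ← ENNReal.ofReal_mul hc,
    ENNReal.ofReal_le_ofReal_iff (by positivity)] at key

end FiniteDimensional

theorem exists_good_ball_explicit_general {d : ℕ} (Ω : Set (EuclideanSpace ℝ (Fin d)))
    (r : ℝ) (hr : 0 < r) (f : EuclideanSpace ℝ (Fin d) → ℝ)
    (hf : ∀ x, 0 ≤ f x) (hint : IntegrableOn f Ω)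
    (N M : ℝ) (hN : (∫ x in Ω, f x) = N) (hNpos : 0 < N)
    (hM : (∫ x in {x ∈ Ω | ball x r ⊆ Ω}, f x) = M) (hMpos : 0 < M) :
    ∃ x₀ ∈ {x ∈ Ω | ball x r ⊆ Ω}, ball x₀ r ⊆ Ω ∧
      (M / (2 * 5 ^ d * N)) * ∫ x in ball x₀ r, f x ≤ ∫ x in ball x₀ (r / 2), f x ∧
      0 < ∫ x in ball x₀ r, f x := by
  set c := M / (2 * 5 ^ d * N)
  have hc : 0 ≤ c := by positivity
  have hgood : ∃ x₀ ∈ {x ∈ Ω | ball x r ⊆ Ω},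
      c * ∫ x in ball x₀ r, f x < ∫ x in ball x₀ (r / 2), f x := by
    by_contra! hbad
    have key := setIntegral_le_of_forall_setIntegral_ball_le hr hf hint hc hbad
    rw [hM, hN, finrank_euclideanSpace_fin] at key
    have : c * (5 ^ d * N) = M / 2 := by simp only [c]; field_simp
    linarith
  obtain ⟨x₀, hx₀, hlt⟩ := hgood
  have hI : 0 ≤ ∫ x in ball x₀ r, f x := setIntegral_nonneg measurableSet_ball fun x _ => hf x
  have hmono : ∫ x in ball x₀ (r / 2), f x ≤ ∫ x in ball x₀ r, f x :=
    setIntegral_mono_set (hint.mono_set hx₀.2) (.of_forall hf)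
      (ball_subset_ball (by linarith)).eventuallyLE
  exact ⟨x₀, hx₀, hx₀.2, hlt.le, by linarith [mul_nonneg hc hI]⟩

/-- **Good ball with explicit overlap constant `5^d`.** If `f ≥ 0` is integrable on the
open set `Ω` with total mass `N > 0` and mass `M > 0` on the `r`-interior `Ω₋ᵣ`, then
there is `x₀ ∈ Ω₋ᵣ` (so `B(x₀,r) ⊆ Ω`) with
`∫_{B(x₀,r/2)} f ≥ (M/(2·5^d·N)) ∫_{B(x₀,r)} f`, and in particular `∫_{B(x₀,r)} f > 0`. -/
theorem exists_good_ball_explicit {d : ℕ} (Ω : Set (EuclideanSpace ℝ (Fin d)))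
    (hΩ : IsOpen Ω) (r : ℝ) (hr : 0 < r) (f : EuclideanSpace ℝ (Fin d) → ℝ)
    (hmeas : Measurable f) (hf : ∀ x, 0 ≤ f x) (hint : IntegrableOn f Ω)
    (N M : ℝ) (hN : (∫ x in Ω, f x) = N) (hNpos : 0 < N)
    (hM : (∫ x in {x ∈ Ω | ball x r ⊆ Ω}, f x) = M) (hMpos : 0 < M) :
    ∃ x₀ ∈ {x ∈ Ω | ball x r ⊆ Ω}, ball x₀ r ⊆ Ω ∧
      (M / (2 * 5 ^ d * N)) * ∫ x in ball x₀ r, f x ≤ ∫ x in ball x₀ (r / 2), f x ∧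
      0 < ∫ x in ball x₀ r, f x :=
  exists_good_ball_explicit_general Ω r hr f hf hint N M hN hNpos hM hMpos
end

section
/- Let Ω ⊆ ℝ^d be open and suppose ψ ∈ L²(Ω) is continuous on Ω, not identically zero on a ball B(x₀, r) ⊆ Ω in the sense that ‖ψ‖_{L²(B(x₀, r/2))}² ≥ θ ‖ψ‖_{L²(B(x₀, r))}² > 0 for some θ ∈ (0, 1], and the rescaled function u(y) = r^{d/2} ψ(x₀ + ry)/‖ψ‖_{L²(B(x₀,r))} is Lipschitz on B(0, 3/4) with constant L > 0. Then inrad({x ∈ Ω : ψ(x) ≠ 0}) ≥ min( θ^{1/2} / (2L · vol(B(0,1/2))^{1/2}), 1/4 ) · r. -/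
/-!
The maximum `M` of `|ψ|` on the closed half ball satisfies `‖ψ‖²_{L²(B(x₀,r/2))} ≤ vol(B(x₀,r/2)) M²`,
so the mass hypothesis forces `M ≥ √θ ‖ψ‖_{L²(B(x₀,r))} / (r^{d/2} vol(B(0,1/2))^{1/2})`. Undoing the
rescaling, `ψ` is Lipschitz on `B(x₀,3r/4)` with constant `L ‖ψ‖_{L²(B(x₀,r))} / r^{d/2+1}`, so it
cannot vanish on the ball of the claimed radius around a maximum point.
-/

open MeasureTheory Metric Set ENNReal

/-- The inner radius of a subset of `ℝ^d`. -/
noncomputable def inrad {d : ℕ} (U : Set (EuclideanSpace ℝ (Fin d))) : ℝ≥0∞ :=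
  ⨆ (ρ : ℝ≥0∞) (_ : ∃ x, EMetric.ball x ρ ⊆ U), ρ

theorem ofReal_le_inrad_of_ball_subset {d : ℕ} {U : Set (EuclideanSpace ℝ (Fin d))}
    {x : EuclideanSpace ℝ (Fin d)} {ρ : ℝ} (h : ball x ρ ⊆ U) : ENNReal.ofReal ρ ≤ inrad U :=
  le_iSup₂_of_le (ENNReal.ofReal ρ) ⟨x, by rwa [EMetric.ball, eball_ofReal]⟩ le_rfl

theorem IsCompact.exists_eLpNorm_restrict_le {X F : Type*} [TopologicalSpace X]
    [MeasurableSpace X] [NormedAddCommGroup F] {μ : Measure X} {f : X → F} {K s : Set X}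
    (hK : IsCompact K) (hKne : K.Nonempty) (hf : ContinuousOn f K) (hs : MeasurableSet s)
    (hsK : s ⊆ K) (p : ℝ≥0∞) :
    ∃ x ∈ K, eLpNorm f p (μ.restrict s) ≤ ‖f x‖ₑ * μ s ^ p.toReal⁻¹ := by
  obtain ⟨x, hx, hmax⟩ := hK.exists_isMaxOn hKne hf.norm
  have hbound : ∀ᵐ y ∂μ.restrict s, ‖f y‖ₑ ≤ ‖f x‖ₑ :=
    (ae_restrict_mem hs).mono fun y hy => enorm_le_iff_norm_le.2 (hmax (hsK hy))
  exact ⟨x, hx, by simpa using eLpNorm_le_of_ae_enorm_bound (p := p) hbound⟩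

theorem exists_mem_closedBall_eLpNorm_two_ball_le {E F : Type*} [NormedAddCommGroup E]
    [NormedSpace ℝ E] [FiniteDimensional ℝ E] [MeasurableSpace E] [BorelSpace E]
    (μ : Measure E) [μ.IsAddHaarMeasure] [NormedAddCommGroup F] {f : E → F} {x : E} {r s : ℝ}
    (hr : 0 < r) (hs : 0 ≤ s) (hf : ContinuousOn f (closedBall x (r * s))) :
    ∃ y ∈ closedBall x (r * s), (eLpNorm f 2 (μ.restrict (ball x (r * s)))).toReal ≤
      r ^ ((Module.finrank ℝ E : ℝ) / 2) * √(μ (ball 0 s)).toReal * ‖f y‖ := by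
  obtain ⟨y, hy, hle⟩ := (isCompact_closedBall x (r * s)).exists_eLpNorm_restrict_le
    (nonempty_closedBall.2 (by positivity)) hf measurableSet_ball ball_subset_closedBall 2
  have hscale : √(μ (ball x (r * s))).toReal =
      r ^ ((Module.finrank ℝ E : ℝ) / 2) * √(μ (ball 0 s)).toReal := by
    rw [μ.addHaar_ball_mul_of_pos x hr, toReal_mul, toReal_ofReal (by positivity),
      Real.sqrt_mul (by positivity), Real.sqrt_eq_rpow, ← Real.rpow_natCast, ← Real.rpow_mul hr.le]
    ring_nf
  refine ⟨y, hy, ?_⟩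
  calc (eLpNorm f 2 (μ.restrict (ball x (r * s)))).toReal
      ≤ (‖f y‖ₑ * μ (ball x (r * s)) ^ (2 : ℝ≥0∞).toReal⁻¹).toReal :=
        toReal_mono (mul_ne_top enorm_ne_top (rpow_ne_top_of_nonneg (by norm_num)
          measure_ball_lt_top.ne)) hle
    _ = _ := by
      rw [← hscale, toReal_mul, toReal_enorm, ← toReal_rpow, Real.sqrt_eq_rpow]
      norm_num
      ring

theorem exists_mem_closedBall_sqrt_mul_le_of_sq_le {E F : Type*} [NormedAddCommGroup E]
    [NormedSpace ℝ E] [FiniteDimensional ℝ E] [MeasurableSpace E] [BorelSpace E]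
    (μ : Measure E) [μ.IsAddHaarMeasure] [NormedAddCommGroup F] {f : E → F} {x : E}
    {r s θ N : ℝ} (hr : 0 < r) (hs : 0 ≤ s) (hf : ContinuousOn f (closedBall x (r * s)))
    (hθ : 0 ≤ θ) (hN : 0 ≤ N)
    (hmass : θ * N ^ 2 ≤ (eLpNorm f 2 (μ.restrict (ball x (r * s)))).toReal ^ 2) :
    ∃ y ∈ closedBall x (r * s),
      √θ * N ≤ r ^ ((Module.finrank ℝ E : ℝ) / 2) * √(μ (ball 0 s)).toReal * ‖f y‖ := by
  obtain ⟨y, hy, hle⟩ := exists_mem_closedBall_eLpNorm_two_ball_le μ hr hs hf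
  refine ⟨y, hy, ?_⟩
  rw [← pow_le_pow_iff_left₀ (by positivity) (by positivity) two_ne_zero, mul_pow,
    Real.sq_sqrt hθ]
  exact hmass.trans (pow_le_pow_left₀ toReal_nonneg hle 2)

theorem dist_le_of_rescaled_norm_sub_le {E F : Type*} [NormedAddCommGroup E]
    [NormedSpace ℝ E] [NormedAddCommGroup F] [NormedSpace ℝ F] {f : E → F} {x₀ : E}
    {r c R L : ℝ} (hr : 0 < r) (hc : 0 < c)
    (h : ∀ y ∈ ball (0 : E) R, ∀ z ∈ ball (0 : E) R,
      ‖c • f (x₀ + r • y) - c • f (x₀ + r • z)‖ ≤ L * dist y z) :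
    ∀ x ∈ ball x₀ (r * R), ∀ x' ∈ ball x₀ (r * R), dist (f x) (f x') ≤ L / (c * r) * dist x x' := by
  have hrescale : ∀ w ∈ ball x₀ (r * R),
      r⁻¹ • (w - x₀) ∈ ball (0 : E) R ∧ x₀ + r • r⁻¹ • (w - x₀) = w := by
    intro w hw
    refine ⟨?_, by rw [smul_inv_smul₀ hr.ne', add_sub_cancel]⟩
    rw [mem_ball, dist_zero_right, norm_smul, norm_inv, Real.norm_of_nonneg hr.le,
      ← dist_eq_norm, inv_mul_lt_iff₀ hr]
    exact hw
  intro x hx x' hx'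
  have key := h _ (hrescale x hx).1 _ (hrescale x' hx').1
  rw [(hrescale x hx).2, (hrescale x' hx').2, ← smul_sub, norm_smul, Real.norm_of_nonneg hc.le,
    dist_eq_norm, ← smul_sub, sub_sub_sub_cancel_right, norm_smul, norm_inv,
    Real.norm_of_nonneg hr.le, ← dist_eq_norm, ← dist_eq_norm] at key
  rw [div_mul_eq_mul_div, le_div_iff₀ (by positivity)]
  calc dist (f x) (f x') * (c * r) = c * dist (f x) (f x') * r := by ring
    _ ≤ L * (r⁻¹ * dist x x') * r := by gcongr
    _ = L * dist x x' := by field_simp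

theorem ball_subset_setOf_ne_zero_of_dist_le {X F : Type*} [PseudoMetricSpace X]
    [NormedAddCommGroup F] {f : X → F} {s : Set X} {L ρ : ℝ} {y : X}
    (hf : ∀ x ∈ s, ∀ x' ∈ s, dist (f x) (f x') ≤ L * dist x x') (hL : 0 ≤ L) (hy : y ∈ s)
    (hys : ball y ρ ⊆ s) (hρ : L * ρ < ‖f y‖) :
    ball y ρ ⊆ {x | f x ≠ 0} := by
  intro x hx hx0
  have h := hf y hy x (hys hx)
  rw [hx0, dist_zero_right] at h
  have : L * dist y x ≤ L * ρ := mul_le_mul_of_nonneg_left (mem_ball'.1 hx).le hL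
  linarith

theorem inradius_from_mass_and_lipschitz_general {d : ℕ} (Ω : Set (EuclideanSpace ℝ (Fin d)))
    (r : ℝ) (hr : 0 < r) (x₀ : EuclideanSpace ℝ (Fin d))
    (hball : ball x₀ r ⊆ Ω) (ψ : EuclideanSpace ℝ (Fin d) → ℂ)
    (hcont : ContinuousOn ψ Ω)
    (θ : ℝ) (hθ0 : 0 < θ)
    (hpos : 0 < (eLpNorm ψ 2 (volume.restrict (ball x₀ r))).toReal)
    (hmass : θ * (eLpNorm ψ 2 (volume.restrict (ball x₀ r))).toReal ^ 2 ≤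
      (eLpNorm ψ 2 (volume.restrict (ball x₀ (r / 2)))).toReal ^ 2)
    (L : ℝ) (hL : 0 < L)
    (hlip : ∀ y ∈ ball (0 : EuclideanSpace ℝ (Fin d)) (3 / 4),
      ∀ z ∈ ball (0 : EuclideanSpace ℝ (Fin d)) (3 / 4),
      ‖(r ^ ((d : ℝ) / 2) / (eLpNorm ψ 2 (volume.restrict (ball x₀ r))).toReal) •
            ψ (x₀ + r • y) -
          (r ^ ((d : ℝ) / 2) / (eLpNorm ψ 2 (volume.restrict (ball x₀ r))).toReal) •
            ψ (x₀ + r • z)‖ ≤ L * dist y z) :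
    ENNReal.ofReal
        (min (Real.sqrt θ /
            (2 * L * Real.sqrt (volume (ball (0 : EuclideanSpace ℝ (Fin d)) (1 / 2))).toReal))
          (1 / 4) * r) ≤ inrad {x ∈ Ω | ψ x ≠ 0} := by
  set N := (eLpNorm ψ 2 (volume.restrict (ball x₀ r))).toReal
  set V := (volume (ball (0 : EuclideanSpace ℝ (Fin d)) (1 / 2))).toReal
  set m := min (√θ / (2 * L * √V)) (1 / 4)
  rw [← mul_one_div r 2] at hmass
  obtain ⟨xs, hxs, hmass'⟩ := exists_mem_closedBall_sqrt_mul_le_of_sq_le volume hr (by norm_num)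
    (hcont.mono ((closedBall_subset_ball (by linarith)).trans hball)) hθ0.le hpos.le hmass
  rw [mul_one_div, mem_closedBall] at hxs
  rw [finrank_euclideanSpace_fin] at hmass'
  have hV : 0 < V := toReal_pos (measure_ball_pos _ _ (by norm_num)).ne' measure_ball_lt_top.ne
  have hψxs : 0 < ‖ψ xs‖ :=
    pos_of_mul_pos_right ((by positivity : 0 < √θ * N).trans_le hmass') (by positivity)
  have hradius : L / (r ^ ((d : ℝ) / 2) / N * r) * (m * r) < ‖ψ xs‖ :=
    calc L / (r ^ ((d : ℝ) / 2) / N * r) * (m * r) = L * m * N / r ^ ((d : ℝ) / 2) := by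
          field_simp
      _ ≤ L * (√θ / (2 * L * √V)) * N / r ^ ((d : ℝ) / 2) := by gcongr; exact min_le_left _ _
      _ = √θ * N / (2 * (r ^ ((d : ℝ) / 2) * √V)) := by field_simp
      _ ≤ r ^ ((d : ℝ) / 2) * √V * ‖ψ xs‖ / (2 * (r ^ ((d : ℝ) / 2) * √V)) := by gcongr
      _ < ‖ψ xs‖ := by field_simp; linarith
  have hsub : ball xs (m * r) ⊆ ball x₀ (r * (3 / 4)) :=
    ball_subset_ball' (by nlinarith [min_le_right (√θ / (2 * L * √V)) (1 / 4)])
  refine ofReal_le_inrad_of_ball_subset fun x hx =>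
    ⟨hball (ball_subset_ball (by linarith) (hsub hx)), ?_⟩
  exact ball_subset_setOf_ne_zero_of_dist_le
    (dist_le_of_rescaled_norm_sub_le hr (by positivity) hlip) (by positivity)
    (mem_ball.2 (by linarith)) hsub hradius hx

/-- **Chaining mass and Lipschitz control into an inradius bound.** Suppose `ψ ∈ L²(Ω)`
is continuous on the open set `Ω`, carries a `θ`-fraction of its `L²(B(x₀,r))` mass on
`B(x₀,r/2)` (with positive mass), and the rescaled normalized function
`u(y) = r^{d/2} ψ(x₀+ry)/‖ψ‖_{L²(B(x₀,r))}` is `L`-Lipschitz on `B(0,3/4)`. Then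
`inrad {ψ ≠ 0} ≥ min (√θ/(2L·vol(B(0,1/2))^{1/2})) (1/4) · r`. -/
theorem inradius_from_mass_and_lipschitz {d : ℕ} (Ω : Set (EuclideanSpace ℝ (Fin d)))
    (hΩ : IsOpen Ω) (r : ℝ) (hr : 0 < r) (x₀ : EuclideanSpace ℝ (Fin d))
    (hball : ball x₀ r ⊆ Ω) (ψ : EuclideanSpace ℝ (Fin d) → ℂ)
    (hcont : ContinuousOn ψ Ω) (hL2 : MemLp ψ 2 (volume.restrict Ω))
    (θ : ℝ) (hθ0 : 0 < θ) (hθ1 : θ ≤ 1)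
    (hpos : 0 < (eLpNorm ψ 2 (volume.restrict (ball x₀ r))).toReal)
    (hmass : θ * (eLpNorm ψ 2 (volume.restrict (ball x₀ r))).toReal ^ 2 ≤
      (eLpNorm ψ 2 (volume.restrict (ball x₀ (r / 2)))).toReal ^ 2)
    (L : ℝ) (hL : 0 < L)
    (hlip : ∀ y ∈ ball (0 : EuclideanSpace ℝ (Fin d)) (3 / 4),
      ∀ z ∈ ball (0 : EuclideanSpace ℝ (Fin d)) (3 / 4),
      ‖(r ^ ((d : ℝ) / 2) / (eLpNorm ψ 2 (volume.restrict (ball x₀ r))).toReal) •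
            ψ (x₀ + r • y) -
          (r ^ ((d : ℝ) / 2) / (eLpNorm ψ 2 (volume.restrict (ball x₀ r))).toReal) •
            ψ (x₀ + r • z)‖ ≤ L * dist y z) :
    ENNReal.ofReal
        (min (Real.sqrt θ /
            (2 * L * Real.sqrt (volume (ball (0 : EuclideanSpace ℝ (Fin d)) (1 / 2))).toReal))
          (1 / 4) * r) ≤ inrad {x ∈ Ω | ψ x ≠ 0} :=
  inradius_from_mass_and_lipschitz_general Ω r hr x₀ hball ψ hcont θ hθ0 hpos hmass L hL hlip
end
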